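/- For an equi-width architecture d = (d,...,d) with L layers, the fiber of the parameter map Ψ over the point Ψ(I_d, ..., I_d) (i.e., the set of weight tuples (W_1,...,W_L) producing the network x ↦ (x_1^{r^{L−1}},...,x_d^{r^{L−1}})), with r ≥ 2, d ≥ 2, L ≥ 2, is exactly the set of tuples obtainable from (I_d,...,I_d) by the multi-homogeneity action: W_1 = P_1 D_1, W_i = P_i D_i D_{i−1}^{−r} P_{i−1}^T for 1 < i < L, and W_L = D_{L−1}^{−r} P_{L−1}^T, with P_i permutation matrices and D_i invertible diagonal matrices. -/

import Mathlib

/-- Polynomial neural network with activation degree r, architecture `d 0, ..., d L`. -/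
def pnn {R : Type*} [CommSemiring R] (r : ℕ) (d : ℕ → ℕ)
    (W : ∀ i : ℕ, Matrix (Fin (d (i+1))) (Fin (d i)) R) :
    (L : ℕ) → ((Fin (d 0) → R) → (Fin (d L) → R))
  | 0 => fun x => x
  | 1 => fun x => (W 0).mulVec x
  | (L+2) => fun x => (W (L+1)).mulVec (fun i => (pnn r d W (L+1) x) i ^ r)

/-!
Coordinatewise powers commute with monomial matrices: `(P D x)^r = P Dʳ xʳ`. Hence, for
`Nᵢ = Pᵢ Dᵢ` with `N₀ = N_L = I`, the layers `Nᵢ₊₁ (Nᵢ^{(r)})⁻¹` telescope to the power map.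

Conversely, a network in the fiber sees its input only through `(W₀ x)^r`. So `W₀` is invertible
and, for every `ε` with `εʳ = 1`, the matrix `W₀⁻¹ diag(ε) W₀` preserves `x ↦ x^{r^{L-1}}`, which
forces it to be diagonal. Taking `ε` equal to a nontrivial root of unity in one coordinate and
`1` elsewhere shows that each column of `W₀` has a single nonzero entry, so `W₀ = P₁ D₁` is
monomial. Absorbing `P₁ D₁ʳ` into the second layer gives a network with one layer less in the
fiber (the power map is onto over an algebraically closed field), and induction finishes.
-/

open Matrix

namespace Matrix

section Monomial

variable {n R : Type*} [Fintype n] [DecidableEq n]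

def monomialMatrix [Semiring R] (σ : Equiv.Perm n) (c : n → R) : Matrix n n R :=
  σ.permMatrix R * diagonal c

lemma monomialMatrix_apply [Semiring R] (σ : Equiv.Perm n) (c : n → R) (i j : n) :
    monomialMatrix σ c i j = if σ i = j then c j else 0 := by
  simp [monomialMatrix, mul_diagonal, PEquiv.toMatrix_apply, Equiv.toPEquiv_apply]

@[simp]
lemma monomialMatrix_one [Semiring R] : monomialMatrix (1 : Equiv.Perm n) (1 : n → R) = 1 := by
  simp [monomialMatrix]

lemma monomialMatrix_mulVec_apply [Semiring R] (σ : Equiv.Perm n) (c x : n → R) (i : n) :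
    (monomialMatrix σ c *ᵥ x) i = c (σ i) * x (σ i) := by
  simp [mulVec, dotProduct, monomialMatrix_apply]

lemma pow_monomialMatrix_mulVec [CommSemiring R] (σ : Equiv.Perm n) (c x : n → R) (r : ℕ) :
    (fun i => (monomialMatrix σ c *ᵥ x) i ^ r) = monomialMatrix σ (c ^ r) *ᵥ fun i => x i ^ r := by
  ext i
  simp only [monomialMatrix_mulVec_apply, Pi.pow_apply, mul_pow]

variable {K : Type*} [Field K]

lemma monomialMatrix_mul_inv {σ : Equiv.Perm n} {c : n → K} (hc : ∀ j, c j ≠ 0) :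
    monomialMatrix σ c * (diagonal c⁻¹ * (σ.permMatrix K)ᵀ) = 1 := by
  rw [monomialMatrix, mul_assoc, ← mul_assoc (diagonal c), diagonal_mul_diagonal]
  simp [mul_inv_cancel₀ (hc _), ← permMatrix_mul]

lemma inv_mul_monomialMatrix {σ : Equiv.Perm n} {c : n → K} (hc : ∀ j, c j ≠ 0) :
    (diagonal c⁻¹ * (σ.permMatrix K)ᵀ) * monomialMatrix σ c = 1 := by
  rw [monomialMatrix, mul_assoc, ← mul_assoc (σ.permMatrix K)ᵀ]
  simp [← permMatrix_mul, diagonal_mul_diagonal, inv_mul_cancel₀ (hc _)]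

lemma eq_mul_diagonal_inv_mul_transpose_iff {σ : Equiv.Perm n} {c : n → K} (hc : ∀ j, c j ≠ 0)
    (X Y : Matrix n n K) :
    X = Y * diagonal c⁻¹ * (σ.permMatrix K)ᵀ ↔ X * monomialMatrix σ c = Y := by
  rw [mul_assoc]
  constructor
  · rintro rfl
    rw [mul_assoc, inv_mul_monomialMatrix hc, mul_one]
  · rintro rfl
    rw [mul_assoc, monomialMatrix_mul_inv hc, mul_one]

lemma IsDiag.of_forall_pow_mulVec_eq {T : Matrix n n K} {R : ℕ} (hR : R ≠ 0)
    (h : ∀ x i, (T *ᵥ x) i ^ R = x i ^ R) : T.IsDiag := by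
  intro i j hij
  by_contra hT
  -- `x = eᵢ - (Tᵢᵢ / Tᵢⱼ) eⱼ` has `xᵢ = 1` but `(T x)ᵢ = 0`.
  have key := h (Pi.single i 1 - (T i i / T i j) • Pi.single j 1) i
  simp [mulVec_sub, mulVec_smul, hij, div_mul_cancel₀ _ hT, zero_pow hR] at key

lemma eq_of_apply_ne_zero_of_forall_diagonal_mul_eq {A : Matrix n n K} {r : ℕ} {ζ : K}
    (hζ : ζ ^ r = 1) (hζ1 : ζ ≠ 1)
    (hA : ∀ ε : n → K, ε ^ r = 1 → ∃ t, diagonal ε * A = A * diagonal t)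
    {i i' j : n} (hi : A i j ≠ 0) (hi' : A i' j ≠ 0) : i = i' := by
  by_contra hne
  set ε : n → K := Function.update 1 i ζ
  obtain ⟨t, ht⟩ := hA ε (by ext k; rcases eq_or_ne k i with rfl | hk <;> simp [ε, *])
  have entry : ∀ k, ε k * A k j = t j * A k j := fun k => by
    simpa [diagonal_mul, mul_diagonal, mul_comm] using congrFun (congrFun ht k) j
  have h1 : ζ = t j := mul_right_cancel₀ hi (by simpa [ε] using entry i)
  have h2 : 1 = t j := mul_right_cancel₀ hi' (by simpa [ε, Ne.symm hne] using entry i')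
  exact hζ1 (h1.trans h2.symm)

lemma exists_eq_monomialMatrix_of_det_ne_zero {A : Matrix n n K} (hA : A.det ≠ 0)
    (hcol : ∀ {i i' j}, A i j ≠ 0 → A i' j ≠ 0 → i = i') :
    ∃ (σ : Equiv.Perm n) (c : n → K), (∀ j, c j ≠ 0) ∧ A = monomialMatrix σ c := by
  have hcol_ne : ∀ j, ∃ i, A i j ≠ 0 := fun j => by
    by_contra! h; exact hA (det_eq_zero_of_column_eq_zero j h)
  have hrow_ne : ∀ i, ∃ j, A i j ≠ 0 := fun i => by
    by_contra! h; exact hA (det_eq_zero_of_row_eq_zero i h)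
  choose f hf using hcol_ne
  have hf_bij : f.Bijective := Finite.surjective_iff_bijective.mp fun i => by
    obtain ⟨j, hj⟩ := hrow_ne i
    exact ⟨j, hcol (hf j) hj⟩
  set e := Equiv.ofBijective f hf_bij
  refine ⟨e.symm, fun j => A (f j) j, hf, ?_⟩
  ext i j
  rw [monomialMatrix_apply]
  by_cases h : i = f j
  · subst h
    simp [e, Equiv.ofBijective_symm_apply_apply]
  · rw [if_neg (by rwa [Equiv.symm_apply_eq, Equiv.ofBijective_apply])]
    by_contra h'
    exact h (hcol h' (hf j))

end Monomial
end Matrix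

lemma exists_pow_eq_one_ne_one (K : Type*) [Field K] [IsAlgClosed K] [CharZero K] {r : ℕ}
    (hr : 2 ≤ r) : ∃ ζ : K, ζ ^ r = 1 ∧ ζ ≠ 1 := by
  obtain ⟨ζ, hζ⟩ := IsAlgClosed.exists_root (Polynomial.cyclotomic r K)
    (Polynomial.degree_cyclotomic_pos r K (by omega)).ne'
  have hprim := (Polynomial.isRoot_cyclotomic_iff_charZero (by omega)).mp hζ
  exact ⟨ζ, hprim.pow_eq_one, hprim.ne_one (by omega)⟩

section Network

variable {R : Type*} [CommSemiring R]

lemma pnn_add_two (r : ℕ) (d : ℕ → ℕ) (W : ∀ i : ℕ, Matrix (Fin (d (i+1))) (Fin (d i)) R)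
    (k : ℕ) (x : Fin (d 0) → R) :
    pnn r d W (k + 2) x =
      pnn r (fun i => d (i + 1)) (fun i => W (i + 1)) (k + 1) fun j => (W 0 *ᵥ x) j ^ r := by
  induction k with
  | zero => rfl
  | succ k ih => exact congrArg (fun y => W (k + 2) *ᵥ fun j => y j ^ r) ih

lemma pnn_mulVec (r d : ℕ) (W : ℕ → Matrix (Fin d) (Fin d) R) (A : Matrix (Fin d) (Fin d) R)
    (k : ℕ) (y : Fin d → R) :
    pnn r (fun _ => d) W (k + 1) (A *ᵥ y) =
      pnn r (fun _ => d) (Function.update W 0 (W 0 * A)) (k + 1) y := by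
  induction k with
  | zero => exact mulVec_mulVec y (W 0) A
  | succ k ih => exact congrArg (fun v => W (k + 1) *ᵥ fun j => v j ^ r) ih

lemma pnn_eq_monomialMatrix_mulVec {r d : ℕ} {W : ℕ → Matrix (Fin d) (Fin d) R}
    {τ : ℕ → Equiv.Perm (Fin d)} {c : ℕ → Fin d → R} (hτ : τ 0 = 1) (hc : c 0 = 1) {k : ℕ}
    (hk : 0 < k)
    (hW : ∀ i < k, W i * monomialMatrix (τ i) (c i ^ r) = monomialMatrix (τ (i + 1)) (c (i + 1)))
    (x : Fin d → R) :
    pnn r (fun _ => d) W k x = monomialMatrix (τ k) (c k) *ᵥ fun j => x j ^ r ^ (k - 1) := by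
  induction k, hk using Nat.le_induction with
  | base =>
    have h0 := hW 0 zero_lt_one
    rw [hτ, hc, one_pow, monomialMatrix_one, mul_one] at h0
    simp [pnn, h0]
  | succ k hk ih =>
    obtain ⟨k, rfl⟩ : ∃ m, k = m + 1 := ⟨k - 1, by omega⟩
    calc pnn r (fun _ => d) W (k + 2) x
        = W (k + 1) *ᵥ fun j => (pnn r (fun _ => d) W (k + 1) x) j ^ r := rfl
      _ = (W (k + 1) * monomialMatrix (τ (k + 1)) (c (k + 1) ^ r)) *ᵥ
            fun j => (x j ^ r ^ k) ^ r := by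
        rw [ih fun i hi => hW i (by omega), pow_monomialMatrix_mulVec, mulVec_mulVec,
          Nat.add_sub_cancel]
      _ = _ := by
        rw [hW (k + 1) (by omega)]
        simp only [Nat.add_sub_cancel, ← pow_mul, ← pow_succ]

/-- `W` lies in the fiber of the parameter map over `Ψ(I, …, I)`. -/
def RealizesPowerMap (r d : ℕ) (W : ℕ → Matrix (Fin d) (Fin d) R) (L : ℕ) : Prop :=
  ∀ x : Fin d → R, pnn r (fun _ => d) W L x = fun i => x i ^ r ^ (L - 1)

/-- `W` is obtained from `(I, …, I)` by the multi-homogeneity action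
`Wᵢ ↦ Nᵢ₊₁ Wᵢ (Nᵢ^{(r)})⁻¹` of monomial matrices `Nᵢ = P(τ i) D(c i)`, `N₀ = N_L = 1`, where
`N^{(r)}` raises the entries of `N` to the `r`-th power. -/
def InIdentityOrbit (r d : ℕ) (W : ℕ → Matrix (Fin d) (Fin d) R) (L : ℕ) : Prop :=
  ∃ (τ : ℕ → Equiv.Perm (Fin d)) (c : ℕ → Fin d → R), (∀ i j, c i j ≠ 0) ∧
    τ 0 = 1 ∧ c 0 = 1 ∧ τ L = 1 ∧ c L = 1 ∧
    ∀ i < L, W i * monomialMatrix (τ i) (c i ^ r) = monomialMatrix (τ (i + 1)) (c (i + 1))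

lemma InIdentityOrbit.realizesPowerMap {r d L : ℕ} {W : ℕ → Matrix (Fin d) (Fin d) R}
    (hL : 0 < L) (hW : InIdentityOrbit r d W L) :
    RealizesPowerMap r d W L := by
  obtain ⟨τ, c, -, hτ0, hc0, hτL, hcL, hrel⟩ := hW
  intro x
  rw [pnn_eq_monomialMatrix_mulVec hτ0 hc0 hL hrel, hτL, hcL, monomialMatrix_one, one_mulVec]

end Network

section AlgClosed

variable {K : Type*} [Field K] [IsAlgClosed K] {r d L : ℕ} {W : ℕ → Matrix (Fin d) (Fin d) K}

lemma RealizesPowerMap.exists_eq_monomialMatrix [CharZero K] (hr : 2 ≤ r)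
    (hW : RealizesPowerMap r d W (L + 2)) :
    ∃ (σ : Equiv.Perm (Fin d)) (c : Fin d → K), (∀ j, c j ≠ 0) ∧ W 0 = monomialMatrix σ c := by
  have hR : r ^ (L + 1) ≠ 0 := by positivity
  have hpow : ∀ x y : Fin d → K, (fun j => (W 0 *ᵥ x) j ^ r) = (fun j => (W 0 *ᵥ y) j ^ r) →
      ∀ i, x i ^ r ^ (L + 1) = y i ^ r ^ (L + 1) := fun x y hxy i => by
    have hxy' : pnn r (fun _ => d) W (L + 2) x = pnn r (fun _ => d) W (L + 2) y := by
      rw [pnn_add_two, pnn_add_two, hxy]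
    exact congrFun ((hW x).symm.trans (hxy'.trans (hW y))) i
  have hdet : (W 0).det ≠ 0 := fun h => by
    obtain ⟨v, hv0, hv⟩ := exists_mulVec_eq_zero_iff.mpr h
    exact hv0 <| funext fun i =>
      (pow_eq_zero_iff hR).mp ((hpow v 0 (by simp [hv]) i).trans (zero_pow hR))
  obtain ⟨ζ, hζ, hζ1⟩ := exists_pow_eq_one_ne_one K hr
  refine exists_eq_monomialMatrix_of_det_ne_zero hdet
    (eq_of_apply_ne_zero_of_forall_diagonal_mul_eq hζ hζ1 fun ε hε => ?_)
  -- `diagonal ε` is invisible after the power map, so `W 0⁻¹ * diagonal ε * W 0` is diagonal.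
  set T := (W 0)⁻¹ * (diagonal ε * W 0)
  have hWT : W 0 * T = diagonal ε * W 0 := by
    rw [← mul_assoc, mul_nonsing_inv _ (isUnit_iff_ne_zero.mpr hdet), one_mul]
  have hT : T.IsDiag := IsDiag.of_forall_pow_mulVec_eq hR fun x => hpow (T *ᵥ x) x <| by
    ext j
    rw [mulVec_mulVec, hWT, ← mulVec_mulVec, mulVec_diagonal, mul_pow, ← Pi.pow_apply, hε,
      Pi.one_apply, one_mul]
  exact ⟨T.diag, by rw [hT.diagonal_diag, hWT]⟩

lemma RealizesPowerMap.tail (hr : r ≠ 0) (hW : RealizesPowerMap r d W (L + 2))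
    {σ : Equiv.Perm (Fin d)} {c : Fin d → K} (h0 : W 0 = monomialMatrix σ c) :
    RealizesPowerMap r d (Function.update (fun i => W (i + 1)) 0 (W 1 * monomialMatrix σ (c ^ r)))
      (L + 1) := by
  intro y
  choose x hx using fun i => IsAlgClosed.exists_pow_nat_eq (y i) (Nat.pos_of_ne_zero hr)
  obtain rfl : (fun i => x i ^ r) = y := funext hx
  rw [← pnn_mulVec, ← pow_monomialMatrix_mulVec, ← h0]
  simpa [← pow_mul, ← pow_succ'] using (pnn_add_two r (fun _ => d) W L x).symm.trans (hW x)

lemma RealizesPowerMap.inIdentityOrbit [CharZero K] (hr : 2 ≤ r) :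
    ∀ {L : ℕ} {W : ℕ → Matrix (Fin d) (Fin d) K},
      RealizesPowerMap r d W (L + 1) → InIdentityOrbit r d W (L + 1)
  | 0, W, hW => by
    have hW0 : W 0 = 1 := ext_iff_mulVec.mpr fun x => by
      rw [one_mulVec]; exact (hW x).trans (by simp)
    exact ⟨fun _ => 1, fun _ => 1, fun _ _ => one_ne_zero, rfl, rfl, rfl, rfl,
      fun i hi => by simp [Nat.lt_one_iff.mp hi, hW0]⟩
  | L + 1, W, hW => by
    obtain ⟨σ, c, hc, h0⟩ := hW.exists_eq_monomialMatrix hr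
    obtain ⟨τ, c', hc', hτ0, hc0, hτL, hcL, hrel⟩ :=
      (hW.tail (by omega) h0).inIdentityOrbit hr
    -- `N₁ = monomialMatrix σ c`, followed by the orbit data of the tail.
    refine ⟨fun | 0 => 1 | i + 1 => Function.update τ 0 σ i,
      fun | 0 => 1 | i + 1 => Function.update c' 0 c i,
      fun | 0, _ => one_ne_zero | i + 1, j => ?_, rfl, rfl, by simpa using hτL,
      by simpa using hcL, fun | 0, _ => ?_ | i + 1, hi => ?_⟩
    · rcases eq_or_ne i 0 with rfl | hi
      · simpa using hc j
      · simpa [hi] using hc' i j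
    · simpa using h0
    · have h := hrel i (by omega)
      rcases eq_or_ne i 0 with rfl | hi0
      · simpa [hτ0, hc0] using h
      · simpa [hi0] using h

theorem realizesPowerMap_iff_inIdentityOrbit [CharZero K] (hr : 2 ≤ r) (hL : 0 < L) :
    RealizesPowerMap r d W L ↔ InIdentityOrbit r d W L := by
  obtain ⟨L, rfl⟩ : ∃ m, L = m + 1 := ⟨L - 1, by omega⟩
  exact ⟨RealizesPowerMap.inIdentityOrbit hr, InIdentityOrbit.realizesPowerMap hL⟩

end AlgClosed

lemma inIdentityOrbit_iff {K : Type*} [Field K] {r d L : ℕ} (hL : 2 ≤ L)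
    (W : ℕ → Matrix (Fin d) (Fin d) K) :
    InIdentityOrbit r d W L ↔
      ∃ (τ : ℕ → Equiv.Perm (Fin d)) (c : ℕ → Fin d → K), (∀ i j, c i j ≠ 0) ∧
        W 0 = monomialMatrix (τ 1) (c 1) ∧
        (∀ i, 0 < i → i < L - 1 → W i = monomialMatrix (τ (i + 1)) (c (i + 1)) *
            diagonal (c i ^ r)⁻¹ * (Equiv.Perm.permMatrix K (τ i))ᵀ) ∧
        W (L - 1) = diagonal (c (L - 1) ^ r)⁻¹ * (Equiv.Perm.permMatrix K (τ (L - 1)))ᵀ := by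
  have hpow {c : Fin d → K} (hc : ∀ j, c j ≠ 0) : ∀ j, (c ^ r) j ≠ 0 :=
    fun j => pow_ne_zero r (hc j)
  have hL0 : L ≠ 0 := by omega
  constructor
  · rintro ⟨τ, c, hc, hτ0, hc0, hτL, hcL, hrel⟩
    refine ⟨τ, c, hc, by simpa [hτ0, hc0] using hrel 0 (by omega),
      fun i _ hi => (eq_mul_diagonal_inv_mul_transpose_iff (hpow (hc i)) _ _).mpr
        (hrel i (by omega)), ?_⟩
    rw [← one_mul (diagonal _), eq_mul_diagonal_inv_mul_transpose_iff (hpow (hc _)),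
      hrel (L - 1) (by omega), Nat.sub_add_cancel (by omega), hτL, hcL, monomialMatrix_one]
  · rintro ⟨τ, c, hc, h0, hmid, hlast⟩
    -- Reset the unconstrained boundary data to `N₀ = N_L = 1`.
    refine ⟨Function.update (Function.update τ L 1) 0 1,
      Function.update (Function.update c L 1) 0 1, fun i j => ?_,
      by simp, by simp, by simp [hL0], by simp [hL0], fun i hi => ?_⟩
    · rcases eq_or_ne i 0 with rfl | hi0
      · simp
      rcases eq_or_ne i L with rfl | hiL
      · simp [hi0]
      · simpa [hiL, hi0] using hc i j
    rcases eq_or_ne i 0 with rfl | hi0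
    · simpa [Function.update_of_ne (by omega : 1 ≠ L)] using h0
    have hiL : i ≠ L := by omega
    rcases eq_or_ne (i + 1) L with rfl | hiL'
    · rw [Nat.add_sub_cancel, ← one_mul (diagonal _),
        eq_mul_diagonal_inv_mul_transpose_iff (hpow (hc i))] at hlast
      simpa [hi0, hiL] using hlast
    · have h := (eq_mul_diagonal_inv_mul_transpose_iff (hpow (hc i)) _ _).mp
        (hmid i (by omega) (by omega))
      simpa [hi0, hiL, hiL'] using h

theorem equiwidth_fiber_is_multihomogeneity_orbit_general
    (d L r : ℕ) (hL : 2 ≤ L) (hr : 2 ≤ r)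
    (W : ℕ → Matrix (Fin d) (Fin d) ℂ) :
    (∀ x : Fin d → ℂ,
        pnn (R := ℂ) r (fun _ => d) W L x = fun i => (x i) ^ (r ^ (L - 1))) ↔
      ∃ (τ : ℕ → Equiv.Perm (Fin d)) (c : ℕ → Fin d → ℂ),
        (∀ i j, c i j ≠ 0) ∧
        W 0 = Equiv.Perm.permMatrix ℂ (τ 1) * Matrix.diagonal (c 1) ∧
        (∀ i, 0 < i → i < L - 1 →
          W i = Equiv.Perm.permMatrix ℂ (τ (i+1)) * Matrix.diagonal (c (i+1)) *
            Matrix.diagonal (fun j => (c i j ^ r)⁻¹) *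
            (Equiv.Perm.permMatrix ℂ (τ i)).transpose) ∧
        W (L-1) = Matrix.diagonal (fun j => (c (L-1) j ^ r)⁻¹) *
          (Equiv.Perm.permMatrix ℂ (τ (L-1))).transpose :=
  (realizesPowerMap_iff_inIdentityOrbit hr (by omega)).trans (inIdentityOrbit_iff hL W)

/-- For the equi-width architecture (d,...,d) with L layers, d ≥ 2,
L ≥ 2, r ≥ 2, the fiber of the parameter map over Ψ(I,...,I), i.e. over the network
x ↦ (x_1^{r^{L−1}},...,x_d^{r^{L−1}}), is exactly the multi-homogeneity orbit of
(I,...,I): W_1 = P_1 D_1, W_i = P_i D_i D_{i−1}^{−r} P_{i−1}ᵀ for 1 < i < L, and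
W_L = D_{L−1}^{−r} P_{L−1}ᵀ. (Weights are 0-indexed: `W k` is W_{k+1}.) -/
theorem equiwidth_fiber_is_multihomogeneity_orbit
    (d L r : ℕ) (hd : 2 ≤ d) (hL : 2 ≤ L) (hr : 2 ≤ r)
    (W : ℕ → Matrix (Fin d) (Fin d) ℂ) :
    (∀ x : Fin d → ℂ,
        pnn (R := ℂ) r (fun _ => d) W L x = fun i => (x i) ^ (r ^ (L - 1))) ↔
      ∃ (τ : ℕ → Equiv.Perm (Fin d)) (c : ℕ → Fin d → ℂ),
        (∀ i j, c i j ≠ 0) ∧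
        W 0 = Equiv.Perm.permMatrix ℂ (τ 1) * Matrix.diagonal (c 1) ∧
        (∀ i, 0 < i → i < L - 1 →
          W i = Equiv.Perm.permMatrix ℂ (τ (i+1)) * Matrix.diagonal (c (i+1)) *
            Matrix.diagonal (fun j => (c i j ^ r)⁻¹) *
            (Equiv.Perm.permMatrix ℂ (τ i)).transpose) ∧
        W (L-1) = Matrix.diagonal (fun j => (c (L-1) j ^ r)⁻¹) *
          (Equiv.Perm.permMatrix ℂ (τ (L-1))).transpose :=
  equiwidth_fiber_is_multihomogeneity_orbit_general d L r hL hr W
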